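/- arXiv:2003.14018 — 2 statements merged into one kernel-verified Lean document; each statement's English description precedes it below -/
import Mathlib

section
/- For the theta time-stepping scheme applied to the scalar ODE u' = λu with step size k, the choice θ = 1/2 + ck (for a constant c > 0) yields a method that is second-order accurate: the local truncation error after one step satisfies |u(k) - u_1| ≤ C k^3 for the exact solution u(t) = e^{λt} u_0, where u_1 = u_0 (1 + k(1-θ)λ)/(1 - kθλ). -/
/-!
Writing z = kλ, one step of the theta scheme multiplies u₀ by
R(θ, z) = (1 + (1 - θ) z) / (1 - θ z). Clearing the denominator and inserting
eᶻ = 1 + z + z²/2 + O(z³) gives (1 - θ z)(eᶻ - R) = (1/2 - θ) z² + O(z³), and the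
choice θ = 1/2 + ck makes the quadratic term c k z² = O(k³) as well.
-/

open Real

lemma abs_exp_sub_quadratic_le {x : ℝ} (hx : |x| ≤ 1) :
    |exp x - (1 + x + x ^ 2 / 2)| ≤ |x| ^ 3 := by
  have h := Real.exp_bound hx (n := 3) (by norm_num)
  norm_num [Finset.sum_range_succ, Nat.factorial] at h
  nlinarith [pow_nonneg (abs_nonneg x) 3]

noncomputable def thetaAmplification (θ z : ℝ) : ℝ := (1 + (1 - θ) * z) / (1 - θ * z)

lemma abs_exp_sub_thetaAmplification_le {θ z : ℝ} (hz : |z| ≤ 1) (hθz : |θ * z| ≤ 1 / 2) :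
    |exp z - thetaAmplification θ z| ≤ 3 * |z| ^ 3 + 2 * |θ - 1 / 2| * z ^ 2 + |θ| * |z| ^ 3 := by
  set D := 1 - θ * z
  set r := exp z - (1 + z + z ^ 2 / 2)
  have hD : 1 / 2 ≤ D := by linarith [(abs_le.mp hθz).2]
  have hDpos : 0 < D := by linarith
  have hD0 : D ≠ 0 := hDpos.ne'
  have hD' : |D| ≤ 3 / 2 := abs_le.mpr ⟨by linarith, by linarith [(abs_le.mp hθz).1]⟩
  have hr : |r| ≤ |z| ^ 3 := abs_exp_sub_quadratic_le hz
  have hsplit : exp z - thetaAmplification θ z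
      = (r * D + (1 / 2 - θ) * z ^ 2 - θ * z ^ 3 / 2) / D := by
    rw [thetaAmplification, eq_div_iff hD0, sub_mul, div_mul_cancel₀ _ hD0]
    ring
  have hrD : |r * D| ≤ 3 / 2 * |z| ^ 3 := by
    rw [abs_mul]; nlinarith [abs_nonneg r, abs_nonneg D, pow_nonneg (abs_nonneg z) 3]
  have hquad : |(1 / 2 - θ) * z ^ 2| = |θ - 1 / 2| * z ^ 2 := by
    rw [abs_mul, abs_sub_comm, abs_of_nonneg (sq_nonneg z)]
  have hcubic : |θ * z ^ 3 / 2| = |θ| * |z| ^ 3 / 2 := by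
    rw [abs_div, abs_mul, abs_pow, abs_two]
  have hnum : |r * D + (1 / 2 - θ) * z ^ 2 - θ * z ^ 3 / 2|
      ≤ 3 / 2 * |z| ^ 3 + |θ - 1 / 2| * z ^ 2 + |θ| * |z| ^ 3 / 2 := by
    linarith [abs_sub (r * D + (1 / 2 - θ) * z ^ 2) (θ * z ^ 3 / 2),
      abs_add_le (r * D) ((1 / 2 - θ) * z ^ 2)]
  have hS : 0 ≤ 3 * |z| ^ 3 + 2 * |θ - 1 / 2| * z ^ 2 + |θ| * |z| ^ 3 := by positivity
  rw [hsplit, abs_div, abs_of_pos hDpos, div_le_iff₀ hDpos]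
  linarith [mul_le_mul_of_nonneg_left hD hS]

section HalfPlusCk

variable {c lam k : ℝ} (hk : 0 < k) (hkc : |c| * k ≤ 1 / 2) (hkl : |lam| * k ≤ 1 / 2)
include hk hkc

lemma abs_half_add_mul_le_one : |1 / 2 + c * k| ≤ 1 := by
  have : |c * k| ≤ 1 / 2 := by rwa [abs_mul, abs_of_pos hk]
  exact (abs_add_le _ _).trans (by rw [abs_of_pos (by norm_num : (0 : ℝ) < 1 / 2)]; linarith)

include hkl

lemma abs_half_add_mul_mul_le : |(1 / 2 + c * k) * (lam * k)| ≤ 1 / 2 := by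
  have hθ := abs_half_add_mul_le_one hk hkc
  rw [abs_mul, abs_mul lam, abs_of_pos hk]
  nlinarith [abs_nonneg (1 / 2 + c * k), abs_nonneg lam]

lemma abs_exp_sub_thetaAmplification_half_add_le :
    |exp (lam * k) - thetaAmplification (1 / 2 + c * k) (lam * k)|
      ≤ (4 * |lam| ^ 3 + 2 * |c| * lam ^ 2) * k ^ 3 := by
  have hz : |lam * k| ≤ 1 := by rw [abs_mul, abs_of_pos hk]; linarith
  have herr := abs_exp_sub_thetaAmplification_le hz (abs_half_add_mul_mul_le hk hkc hkl)
  rw [show 1 / 2 + c * k - 1 / 2 = c * k by ring, abs_mul lam, abs_mul c, abs_of_pos hk,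
    mul_pow] at herr
  have hcubic := mul_le_mul_of_nonneg_right (abs_half_add_mul_le_one hk hkc)
    (by positivity : 0 ≤ |lam| ^ 3 * k ^ 3)
  linarith

end HalfPlusCk

theorem theta_scheme_second_order_general (lam c u0 : ℝ) :
    ∃ C k0 : ℝ, 0 < C ∧ 0 < k0 ∧ ∀ k : ℝ, 0 < k → k ≤ k0 →
      (1 - k * (1/2 + c*k) * lam ≠ 0 ∧
       |Real.exp (lam * k) * u0 -
         u0 * (1 + k * (1 - (1/2 + c*k)) * lam) / (1 - k * (1/2 + c*k) * lam)|
         ≤ C * k^3) := by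
  refine ⟨|u0| * (4 * |lam| ^ 3 + 2 * |c| * lam ^ 2) + 1, 1 / (2 * (|c| + |lam| + 1)),
    by positivity, by positivity, fun k hk hk0 => ?_⟩
  rw [le_div_iff₀ (by positivity)] at hk0
  have hkc : |c| * k ≤ 1 / 2 := by nlinarith [abs_nonneg lam]
  have hkl : |lam| * k ≤ 1 / 2 := by nlinarith [abs_nonneg c]
  have hθz := abs_half_add_mul_mul_le hk hkc hkl
  refine ⟨(by linarith [(abs_le.mp hθz).2] : 0 < 1 - k * (1/2 + c*k) * lam).ne', ?_⟩
  have hform : Real.exp (lam * k) * u0 -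
      u0 * (1 + k * (1 - (1/2 + c*k)) * lam) / (1 - k * (1/2 + c*k) * lam)
      = u0 * (Real.exp (lam * k) - thetaAmplification (1 / 2 + c * k) (lam * k)) := by
    rw [thetaAmplification, mul_sub, mul_div_assoc]; ring_nf
  rw [hform, abs_mul]
  calc |u0| * |Real.exp (lam * k) - thetaAmplification (1 / 2 + c * k) (lam * k)|
      ≤ |u0| * ((4 * |lam| ^ 3 + 2 * |c| * lam ^ 2) * k ^ 3) :=
        by gcongr; exact abs_exp_sub_thetaAmplification_half_add_le hk hkc hkl
    _ ≤ _ := by nlinarith [pow_pos hk 3]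

/-- The theta scheme with θ = 1/2 + ck applied to u' = λu is second-order
accurate: the local truncation error after one step is O(k³). -/
theorem theta_scheme_second_order (lam c u0 : ℝ) (hc : 0 < c) :
    ∃ C k0 : ℝ, 0 < C ∧ 0 < k0 ∧ ∀ k : ℝ, 0 < k → k ≤ k0 →
      (1 - k * (1/2 + c*k) * lam ≠ 0 ∧
       |Real.exp (lam * k) * u0 -
         u0 * (1 + k * (1 - (1/2 + c*k)) * lam) / (1 - k * (1/2 + c*k) * lam)|
         ≤ C * k^3) :=
  theta_scheme_second_order_general lam c u0
end

section
/- For the rotated test function ψ^θ(t) = 1 + (6θ-3)(2t - t_{n-1} - t_n)/k_n on I_n = [t_{n-1}, t_n], the quadrature rule ∫_{I_n} f ψ^θ dt ≈ k_n θ f(t_n) + k_n (1-θ) f(t_{n-1}) has error bounded by C k_n^2 ‖f''‖_{L^1(I_n)} for f ∈ C^2(I_n), with a constant C independent of f, θ ∈ [0,1], and k_n. -/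
/-!
The θ-rule with weight ψ^θ integrates affine functions exactly, so its error on `f` equals its
error on the remainder `R = f - p` of the linear Taylor polynomial `p` of `f` at `t_{n-1}`.
Since `|ψ^θ| ≤ 4` and the nodal weights `k_n θ`, `k_n (1 - θ)` sum to `k_n`, the error functional
is at most `5 k_n sup |R|`, and two applications of the mean value inequality give
`sup |R| ≤ k_n ‖f''‖_{L¹(I_n)}`.
-/

open Set intervalIntegral MeasureTheory

/-- The test function `ψ^θ` on `I_n = [a, b]`. -/
noncomputable def thetaWeight (θ a b t : ℝ) : ℝ := 1 + (6 * θ - 3) * (2 * t - a - b) / (b - a)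

noncomputable def thetaQuadratureError (θ a b : ℝ) (g : ℝ → ℝ) : ℝ :=
  (∫ t in a..b, g t * thetaWeight θ a b t) - ((b - a) * θ * g b + (b - a) * (1 - θ) * g a)

lemma continuous_thetaWeight (θ a b : ℝ) : Continuous (thetaWeight θ a b) := by
  unfold thetaWeight; fun_prop

lemma abs_thetaWeight_le {θ a b t : ℝ} (hθ₀ : 0 ≤ θ) (hθ₁ : θ ≤ 1) (ht : t ∈ Icc a b)
    (hab : a < b) : |thetaWeight θ a b t| ≤ 4 := by
  have hk : 0 < b - a := sub_pos.mpr hab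
  have h₁ : |6 * θ - 3| ≤ 3 := abs_le.mpr ⟨by linarith, by linarith⟩
  have h₂ : |2 * t - a - b| ≤ b - a := abs_le.mpr ⟨by linarith [ht.1], by linarith [ht.2]⟩
  have h₃ : |(6 * θ - 3) * (2 * t - a - b) / (b - a)| ≤ 3 := by
    rw [abs_div, abs_mul, abs_of_pos hk, div_le_iff₀ hk]
    exact mul_le_mul h₁ h₂ (abs_nonneg _) (by norm_num)
  calc |thetaWeight θ a b t| ≤ |1| + |(6 * θ - 3) * (2 * t - a - b) / (b - a)| := abs_add_le _ _
    _ ≤ 4 := by rw [abs_one]; linarith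

lemma abs_thetaQuadratureError_le {θ a b M : ℝ} {g : ℝ → ℝ} (hθ₀ : 0 ≤ θ) (hθ₁ : θ ≤ 1)
    (hab : a < b) (hg : ∀ t ∈ Icc a b, |g t| ≤ M) :
    |thetaQuadratureError θ a b g| ≤ 5 * (b - a) * M := by
  have hk : 0 < b - a := sub_pos.mpr hab
  have hint : |∫ t in a..b, g t * thetaWeight θ a b t| ≤ M * 4 * (b - a) := by
    have := norm_integral_le_of_norm_le_const (a := a) (b := b)
      (f := fun t => g t * thetaWeight θ a b t) (C := M * 4) fun t ht => by
        have ht' : t ∈ Icc a b := Ioc_subset_Icc_self (uIoc_of_le hab.le ▸ ht)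
        rw [Real.norm_eq_abs, abs_mul]
        exact mul_le_mul (hg t ht') (abs_thetaWeight_le hθ₀ hθ₁ ht' hab) (abs_nonneg _)
          ((abs_nonneg _).trans (hg t ht'))
    rwa [Real.norm_eq_abs, abs_of_pos hk] at this
  have hgb := hg b ⟨hab.le, le_rfl⟩
  have hga := hg a ⟨le_rfl, hab.le⟩
  have hnodes : |(b - a) * θ * g b + (b - a) * (1 - θ) * g a| ≤ (b - a) * M := by
    calc _ ≤ |(b - a) * θ * g b| + |(b - a) * (1 - θ) * g a| := abs_add_le _ _
      _ = (b - a) * θ * |g b| + (b - a) * (1 - θ) * |g a| := by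
        rw [abs_mul, abs_mul, abs_mul, abs_mul, abs_of_pos hk, abs_of_nonneg hθ₀,
          abs_of_nonneg (sub_nonneg.mpr hθ₁)]
      _ ≤ (b - a) * θ * M + (b - a) * (1 - θ) * M := by gcongr
      _ = (b - a) * M := by ring
  unfold thetaQuadratureError
  calc _ ≤ _ := abs_sub _ _
    _ ≤ M * 4 * (b - a) + (b - a) * M := add_le_add hint hnodes
    _ = 5 * (b - a) * M := by ring

lemma thetaQuadratureError_affine (θ : ℝ) {a b : ℝ} (hab : a ≠ b) (c d : ℝ) :
    thetaQuadratureError θ a b (fun t => c + d * t) = 0 := by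
  have hk : b - a ≠ 0 := sub_ne_zero.mpr hab.symm
  set α := (6 * θ - 3) / (b - a)
  have hpoly : (fun t => (c + d * t) * thetaWeight θ a b t) =
      fun t => c * (1 - α * (a + b)) + (2 * c * α + d * (1 - α * (a + b))) * t
        + 2 * d * α * t ^ 2 := by
    funext t; simp only [thetaWeight, α]; field_simp; ring
  unfold thetaQuadratureError
  rw [hpoly]
  have hcont {h : ℝ → ℝ} (hh : Continuous h) : IntervalIntegrable h volume a b :=
    hh.intervalIntegrable a b
  rw [intervalIntegral.integral_add (hcont (by fun_prop)) (hcont (by fun_prop)),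
    intervalIntegral.integral_add (hcont (by fun_prop)) (hcont (by fun_prop)),
    intervalIntegral.integral_const,
    intervalIntegral.integral_const_mul, intervalIntegral.integral_const_mul, integral_id,
    integral_pow]
  simp only [α, smul_eq_mul]
  field_simp
  ring

lemma thetaQuadratureError_sub {θ a b : ℝ} {g h : ℝ → ℝ} (hg : IntervalIntegrable g volume a b)
    (hh : IntervalIntegrable h volume a b) :
    thetaQuadratureError θ a b (fun t => g t - h t) =
      thetaQuadratureError θ a b g - thetaQuadratureError θ a b h := by
  have hψ := (continuous_thetaWeight θ a b).continuousOn (s := uIcc a b)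
  unfold thetaQuadratureError
  simp only [sub_mul]
  rw [intervalIntegral.integral_sub (hg.mul_continuousOn hψ) (hh.mul_continuousOn hψ)]
  ring

lemma abs_sub_le_integral_abs_deriv {g : ℝ → ℝ} (hg : ContDiff ℝ 1 g) {a b s : ℝ}
    (hs : s ∈ Icc a b) : |g s - g a| ≤ ∫ x in a..b, |deriv g x| := by
  have hg' : Continuous (deriv g) := hg.continuous_deriv le_rfl
  rw [← integral_deriv_eq_sub (fun x _ => (hg.differentiable one_ne_zero) x)
    (hg'.intervalIntegrable a s)]
  calc _ ≤ ∫ x in a..s, |deriv g x| := abs_integral_le_integral_abs hs.1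
    _ ≤ ∫ x in a..b, |deriv g x| :=
      integral_mono_interval le_rfl hs.1 hs.2 (Filter.Eventually.of_forall fun _ => abs_nonneg _)
        (hg'.abs.intervalIntegrable a b)

lemma abs_sub_sub_mul_deriv_le {f : ℝ → ℝ} (hf : ContDiff ℝ 2 f) {a b t : ℝ}
    (ht : t ∈ Icc a b) :
    |f t - f a - (t - a) * deriv f a| ≤ (b - a) * ∫ x in a..b, |deriv (deriv f) x| := by
  have hf' : ContDiff ℝ 1 (deriv f) := hf.iterate_deriv' 1 1
  have hderiv : ∀ x ∈ Icc a b, HasDerivWithinAt (fun x => f x - x * deriv f a)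
      (deriv f x - deriv f a) (Icc a b) x := fun x _ =>
    (((hf.differentiable (by norm_num)) x).hasDerivAt.sub
      ((hasDerivAt_id x).mul_const (deriv f a))).hasDerivWithinAt |>.congr_deriv (by simp)
  have := norm_image_sub_le_of_norm_deriv_le_segment' hderiv
    (fun x hx => abs_sub_le_integral_abs_deriv hf' (Ico_subset_Icc_self hx)) t ht
  have hI : 0 ≤ ∫ x in a..b, |deriv (deriv f) x| :=
    integral_nonneg (ht.1.trans ht.2) fun _ _ => abs_nonneg _
  calc |f t - f a - (t - a) * deriv f a| = ‖(f t - t * deriv f a) - (f a - a * deriv f a)‖ := by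
        rw [Real.norm_eq_abs]; ring_nf
    _ ≤ (∫ x in a..b, |deriv (deriv f) x|) * (t - a) := this
    _ ≤ (b - a) * ∫ x in a..b, |deriv (deriv f) x| := by
        rw [mul_comm]; gcongr; exact ht.2

/-- Quadrature error of the theta rule for the weighted integral
∫ f ψ^θ dt is bounded by C k_n² ‖f''‖_{L¹(I_n)}, with C independent of
f, θ ∈ [0,1] and the step size. -/
theorem theta_quadrature_error :
    ∃ C : ℝ, 0 < C ∧ ∀ θ : ℝ, 0 ≤ θ → θ ≤ 1 → ∀ t0 t1 : ℝ, t0 < t1 →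
      ∀ f : ℝ → ℝ, ContDiff ℝ 2 f →
      |(∫ t in t0..t1, f t * (1 + (6*θ - 3) * (2*t - t0 - t1) / (t1 - t0)))
          - ((t1 - t0) * θ * f t1 + (t1 - t0) * (1 - θ) * f t0)|
        ≤ C * (t1 - t0)^2 * ∫ t in t0..t1, |deriv (deriv f) t| := by
  refine ⟨5, by norm_num, fun θ hθ₀ hθ₁ t0 t1 hlt f hf => ?_⟩
  set p : ℝ → ℝ := fun t => (f t0 - t0 * deriv f t0) + deriv f t0 * t
  have hexact : thetaQuadratureError θ t0 t1 f =
      thetaQuadratureError θ t0 t1 (fun t => f t - p t) := by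
    rw [thetaQuadratureError_sub (hf.continuous.intervalIntegrable _ _)
      ((by fun_prop : Continuous p).intervalIntegrable _ _), thetaQuadratureError_affine θ hlt.ne,
      sub_zero]
  have hremainder : ∀ t ∈ Icc t0 t1,
      |f t - p t| ≤ (t1 - t0) * ∫ t in t0..t1, |deriv (deriv f) t| := fun t ht => by
    convert abs_sub_sub_mul_deriv_le hf ht using 2
    ring
  calc |thetaQuadratureError θ t0 t1 f|
      ≤ 5 * (t1 - t0) * ((t1 - t0) * ∫ t in t0..t1, |deriv (deriv f) t|) :=
        hexact ▸ abs_thetaQuadratureError_le hθ₀ hθ₁ hlt hremainder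
    _ = _ := by ring
end
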